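/- arXiv:2304.12120 — 2 statements merged into one kernel-verified Lean document; each statement's English description precedes it below -/
import Mathlib

section
/- Let $X$ be a ball quasi-Banach function space on $\mathbb{R}^n$, $q \in [1,\infty)$, $d \in \mathbb{Z}_+$, and $s \in (0,\infty)$. For $f \in L^q_{loc}(\mathbb{R}^n)$, define $\|f\|_{\mathcal{L}}$ as the supremum over finite families ($m \in \mathbb{N}$, balls $B^{(1)},\dots,B^{(m)}$, weights $\lambda_1,\dots,\lambda_m \ge 0$ with $\sum \lambda_j \neq 0$), and $\widetilde{\|f\|}_{\mathcal{L}}$ as the analogous supremum over countable families $\{B^{(j)}\}_{j\in\mathbb{N}}$, $\{\lambda_j\}_{j\in\mathbb{N}}$ with $0 < \left\|\left\{\sum_j (\lambda_j/\|\mathbf{1}_{B^{(j)}}\|_X)^s \mathbf{1}_{B^{(j)}}\right\}^{1/s}\right\|_X < \infty$, of the quantity $\left\|\left\{\sum_i (\lambda_i/\|\mathbf{1}_{B^{(i)}}\|_X)^s \mathbf{1}_{B^{(i)}}\right\}^{1/s}\right\|_X^{-1} \sum_j \frac{\lambda_j |B^{(j)}|}{\|\mathbf{1}_{B^{(j)}}\|_X}\left(\frac{1}{|B^{(j)}|}\int_{B^{(j)}}|f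 - P^d_{B^{(j)}}f|^q\right)^{1/q}$. Then $\|f\|_{\mathcal{L}} = \widetilde{\|f\|}_{\mathcal{L}}$. -/
open MeasureTheory ENNReal

/-- The summand `λ_j |B_j| / ‖1_{B_j}‖_X · (⨍_{B_j} |f - P^d_{B_j} f|^q)^{1/q}`
appearing in the anisotropic ball Campanato quasi-norm. -/
noncomputable def camTerm {n : ℕ} (q : ℝ) (N : ((Fin n → ℝ) → ENNReal) → ENNReal)
    (f : (Fin n → ℝ) → ℝ) (P : Set (Fin n → ℝ) → (Fin n → ℝ) → ℝ)
    (B : Set (Fin n → ℝ)) (l : NNReal) : ENNReal :=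
  (l : ENNReal) * volume B / N (Set.indicator B fun _ => 1) *
    ENNReal.ofReal ((⨍ x in B, |f x - P B x| ^ q ∂volume) ^ (1 / q))

/-- The building block `(λ/‖1_B‖_X)^s · 1_B` of the weight function in the
anisotropic ball Campanato quasi-norm. -/
noncomputable def camWeight {n : ℕ} (s : ℝ) (N : ((Fin n → ℝ) → ENNReal) → ENNReal)
    (B : Set (Fin n → ℝ)) (l : NNReal) : (Fin n → ℝ) → ENNReal :=
  fun x => ((l : ENNReal) / N (Set.indicator B fun _ => 1)) ^ s *
    Set.indicator B (fun _ => (1 : ENNReal)) x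

open Finset

/-! A finite family is a countable one padded with zero weights, which changes neither the
weight function nor the sum of the terms. Conversely, the terms of a countable family are
approximated by its truncations, and the weight function of a truncation is pointwise
below the full one, so by monotonicity of the quasi-norm its reciprocal is larger. -/

variable {n : ℕ}

lemma camWeight_zero {s : ℝ} (hs : 0 < s) (N : ((Fin n → ℝ) → ℝ≥0∞) → ℝ≥0∞)
    (B : Set (Fin n → ℝ)) : camWeight s N B 0 = 0 := by
  funext x
  simp [camWeight, ENNReal.zero_rpow_of_pos hs]

lemma camTerm_zero (q : ℝ) (N : ((Fin n → ℝ) → ℝ≥0∞) → ℝ≥0∞) (f : (Fin n → ℝ) → ℝ)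
    (P : Set (Fin n → ℝ) → (Fin n → ℝ) → ℝ) (B : Set (Fin n → ℝ)) :
    camTerm q N f P B 0 = 0 := by
  simp [camTerm]

lemma camWeight_rpow_one_div {s : ℝ} (hs : 0 < s) (N : ((Fin n → ℝ) → ℝ≥0∞) → ℝ≥0∞)
    (B : Set (Fin n → ℝ)) (l : NNReal) (x : Fin n → ℝ) :
    camWeight s N B l x ^ (1 / s) =
      (l : ℝ≥0∞) / N (Set.indicator B fun _ => 1) * Set.indicator B (fun _ => 1) x := by
  by_cases hx : x ∈ B
  · simp only [camWeight, Set.indicator_of_mem hx, mul_one]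
    rw [← ENNReal.rpow_mul, mul_one_div_cancel hs.ne', ENNReal.rpow_one]
  · simp only [camWeight, Set.indicator_of_notMem hx, mul_zero]
    exact ENNReal.zero_rpow_of_pos (one_div_pos.mpr hs)

lemma tsum_ite_lt_eq_sum_range {M β : Type*} [AddCommMonoid M] [TopologicalSpace M] [Zero β]
    (g : ℕ → β → M) (hg : ∀ i, g i 0 = 0) (lam : ℕ → β) (m : ℕ) :
    ∑' i, g i (if i < m then lam i else 0) = ∑ i ∈ range m, g i (lam i) := by
  rw [tsum_eq_sum (s := range m) fun i hi => by
    rw [if_neg (by simpa using hi), hg]]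
  exact sum_congr rfl fun i hi => by rw [if_pos (mem_range.mp hi)]

lemma coe_le_of_camWeight_le {s : ℝ} (hs : 0 < s) {N : ((Fin n → ℝ) → ℝ≥0∞) → ℝ≥0∞}
    (hmono : Monotone N)
    (hhom : ∀ (c : ℝ≥0∞) (F : (Fin n → ℝ) → ℝ≥0∞), c ≠ ⊤ →
      N (fun x => c * F x) = c * N F)
    {B : Set (Fin n → ℝ)} (hBpos : 0 < N (Set.indicator B fun _ => 1))
    (hBfin : N (Set.indicator B fun _ => 1) < ⊤) {l : NNReal} {F : (Fin n → ℝ) → ℝ≥0∞}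
    (hF : camWeight s N B l ≤ F) :
    (l : ℝ≥0∞) ≤ N (fun x => F x ^ (1 / s)) := by
  have hc : (l : ℝ≥0∞) / N (Set.indicator B fun _ => 1) ≠ ⊤ :=
    (ENNReal.div_lt_top coe_ne_top hBpos.ne').ne
  calc (l : ℝ≥0∞)
      = N (fun x => (l : ℝ≥0∞) / N (Set.indicator B fun _ => 1) *
          Set.indicator B (fun _ => 1) x) := by
        rw [hhom _ _ hc, ENNReal.div_mul_cancel hBpos.ne' hBfin.ne]
    _ ≤ N (fun x => F x ^ (1 / s)) := hmono fun x => by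
        rw [← camWeight_rpow_one_div hs]
        exact ENNReal.rpow_le_rpow (hF x) (one_div_pos.mpr hs).le

lemma exists_ne_zero_of_pos_N_tsum_camWeight {s : ℝ} (hs : 0 < s)
    {N : ((Fin n → ℝ) → ℝ≥0∞) → ℝ≥0∞} (hN0 : N 0 = 0) {Bf : ℕ → Set (Fin n → ℝ)}
    {lam : ℕ → NNReal}
    (hpos : 0 < N (fun x => (∑' i, camWeight s N (Bf i) (lam i) x) ^ (1 / s))) :
    ∃ j, lam j ≠ 0 := by
  by_contra! h
  have hzero : (fun x => (∑' i, camWeight s N (Bf i) (lam i) x) ^ (1 / s)) = 0 := by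
    funext x
    simp [h, camWeight_zero hs, hs]
  rw [hzero, hN0] at hpos
  exact lt_irrefl 0 hpos

def finiteCampanatoRatios (q s : ℝ) (N : ((Fin n → ℝ) → ℝ≥0∞) → ℝ≥0∞)
    (Balls : Set (Set (Fin n → ℝ))) (f : (Fin n → ℝ) → ℝ)
    (P : Set (Fin n → ℝ) → (Fin n → ℝ) → ℝ) : Set ℝ≥0∞ :=
  {c | ∃ (m : ℕ) (Bf : ℕ → Set (Fin n → ℝ)) (lam : ℕ → NNReal),
    (∀ i, Bf i ∈ Balls) ∧ (∑ j ∈ range m, lam j) ≠ 0 ∧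
    c = (N (fun x => (∑ i ∈ range m, camWeight s N (Bf i) (lam i) x) ^ (1 / s)))⁻¹ *
      ∑ j ∈ range m, camTerm q N f P (Bf j) (lam j)}

def countableCampanatoRatios (q s : ℝ) (N : ((Fin n → ℝ) → ℝ≥0∞) → ℝ≥0∞)
    (Balls : Set (Set (Fin n → ℝ))) (f : (Fin n → ℝ) → ℝ)
    (P : Set (Fin n → ℝ) → (Fin n → ℝ) → ℝ) : Set ℝ≥0∞ :=
  {c | ∃ (Bf : ℕ → Set (Fin n → ℝ)) (lam : ℕ → NNReal),
    (∀ i, Bf i ∈ Balls) ∧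
    0 < N (fun x => (∑' i, camWeight s N (Bf i) (lam i) x) ^ (1 / s)) ∧
    N (fun x => (∑' i, camWeight s N (Bf i) (lam i) x) ^ (1 / s)) < ⊤ ∧
    c = (N (fun x => (∑' i, camWeight s N (Bf i) (lam i) x) ^ (1 / s)))⁻¹ *
      ∑' j, camTerm q N f P (Bf j) (lam j)}

section

variable {q s : ℝ} {N : ((Fin n → ℝ) → ℝ≥0∞) → ℝ≥0∞} {Balls : Set (Set (Fin n → ℝ))}
  {f : (Fin n → ℝ) → ℝ} {P : Set (Fin n → ℝ) → (Fin n → ℝ) → ℝ}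

lemma sSup_finiteCampanatoRatios_le (hs : 0 < s) (hmono : Monotone N)
    (hhom : ∀ (c : ℝ≥0∞) (F : (Fin n → ℝ) → ℝ≥0∞), c ≠ ⊤ →
      N (fun x => c * F x) = c * N F)
    (hBpos : ∀ B ∈ Balls, 0 < N (Set.indicator B fun _ => 1))
    (hBfin : ∀ B ∈ Balls, N (Set.indicator B fun _ => 1) < ⊤) :
    sSup (finiteCampanatoRatios q s N Balls f P) ≤
      sSup (countableCampanatoRatios q s N Balls f P) := by
  refine sSup_le ?_
  rintro _ ⟨m, Bf, lam, hB, hlam, rfl⟩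
  set A := N (fun x => (∑ i ∈ range m, camWeight s N (Bf i) (lam i) x) ^ (1 / s))
  rcases eq_or_ne A ⊤ with hAtop | hAtop
  · simp [hAtop]
  obtain ⟨j, hjm, hj⟩ := exists_ne_zero_of_sum_ne_zero hlam
  have hApos : 0 < A := (coe_pos.mpr (pos_iff_ne_zero.mpr hj)).trans_le <|
    coe_le_of_camWeight_le hs hmono hhom (hBpos _ (hB j)) (hBfin _ (hB j)) fun x =>
      single_le_sum (f := fun i => camWeight s N (Bf i) (lam i) x) (fun _ _ => zero_le) hjm
  refine le_sSup ⟨Bf, fun j => if j < m then lam j else 0, hB, ?_⟩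
  have hweight (x : Fin n → ℝ) : ∑' i, camWeight s N (Bf i) (if i < m then lam i else 0) x =
      ∑ i ∈ range m, camWeight s N (Bf i) (lam i) x :=
    tsum_ite_lt_eq_sum_range (fun i l => camWeight s N (Bf i) l x)
      (fun i => congrFun (camWeight_zero hs N (Bf i)) x) lam m
  simp only [hweight,
    tsum_ite_lt_eq_sum_range (fun i => camTerm q N f P (Bf i)) (fun i => camTerm_zero q N f P _)]
  exact ⟨hApos, hAtop.lt_top, rfl⟩

lemma sSup_countableCampanatoRatios_le (hs : 0 < s) (hmono : Monotone N) (hN0 : N 0 = 0) :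
    sSup (countableCampanatoRatios q s N Balls f P) ≤
      sSup (finiteCampanatoRatios q s N Balls f P) := by
  refine sSup_le ?_
  rintro _ ⟨Bf, lam, hB, hpos, -, rfl⟩
  obtain ⟨j, hj⟩ := exists_ne_zero_of_pos_N_tsum_camWeight hs hN0 hpos
  rw [ENNReal.tsum_eq_iSup_nat, ENNReal.mul_iSup]
  refine iSup_le fun m => ?_
  set M := max m (j + 1)
  have hjM : j ∈ range M := mem_range.mpr (by omega)
  have hsum : (∑ i ∈ range M, lam i) ≠ 0 := fun h => hj (sum_eq_zero_iff.mp h j hjM)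
  have hweight : N (fun x => (∑ i ∈ range M, camWeight s N (Bf i) (lam i) x) ^ (1 / s)) ≤
      N (fun x => (∑' i, camWeight s N (Bf i) (lam i) x) ^ (1 / s)) :=
    hmono fun x => ENNReal.rpow_le_rpow (ENNReal.sum_le_tsum _) (one_div_pos.mpr hs).le
  exact (mul_le_mul' (ENNReal.inv_le_inv' hweight)
    (sum_le_sum_of_subset (range_subset_range.mpr (le_max_left m (j + 1))))).trans
    (le_sSup ⟨M, Bf, lam, hB, hsum, rfl⟩)

end

theorem stmt_11_general (n : ℕ) (q s : ℝ) (hs : 0 < s)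
    (N : ((Fin n → ℝ) → ENNReal) → ENNReal)
    (Balls : Set (Set (Fin n → ℝ)))
    (hBpos : ∀ B ∈ Balls, 0 < N (Set.indicator B fun _ => 1))
    (hBfin : ∀ B ∈ Balls, N (Set.indicator B fun _ => 1) < ⊤)
    (hmono : ∀ F G : (Fin n → ℝ) → ENNReal,
      (∀ᵐ x ∂(volume : Measure (Fin n → ℝ)), F x ≤ G x) → N F ≤ N G)
    (hhom : ∀ (c : ENNReal) (F : (Fin n → ℝ) → ENNReal), c ≠ ⊤ →
      N (fun x => c * F x) = c * N F)
    (f : (Fin n → ℝ) → ℝ)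
    (P : Set (Fin n → ℝ) → (Fin n → ℝ) → ℝ) :
    sSup {c : ENNReal | ∃ (m : ℕ) (Bf : ℕ → Set (Fin n → ℝ)) (lam : ℕ → NNReal),
        (∀ i, Bf i ∈ Balls) ∧ (∑ j ∈ Finset.range m, lam j) ≠ 0 ∧
        c = (N (fun x => (∑ i ∈ Finset.range m, camWeight s N (Bf i) (lam i) x) ^ (1 / s)))⁻¹ *
              ∑ j ∈ Finset.range m, camTerm q N f P (Bf j) (lam j)} =
    sSup {c : ENNReal | ∃ (Bf : ℕ → Set (Fin n → ℝ)) (lam : ℕ → NNReal),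
        (∀ i, Bf i ∈ Balls) ∧
        0 < N (fun x => (∑' i, camWeight s N (Bf i) (lam i) x) ^ (1 / s)) ∧
        N (fun x => (∑' i, camWeight s N (Bf i) (lam i) x) ^ (1 / s)) < ⊤ ∧
        c = (N (fun x => (∑' i, camWeight s N (Bf i) (lam i) x) ^ (1 / s)))⁻¹ *
              ∑' j, camTerm q N f P (Bf j) (lam j)} := by
  have hmono' : Monotone N := fun F G h => hmono F G (.of_forall h)
  have hN0 : N 0 = 0 := by
    have h := hhom 0 0 zero_ne_top
    simp only [zero_mul] at h
    exact h
  exact le_antisymm (sSup_finiteCampanatoRatios_le hs hmono' hhom hBpos hBfin)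
    (sSup_countableCampanatoRatios_le hs hmono' hN0)

/-- For a ball quasi-Banach function space `X` (quasi-norm `N` on
nonnegative functions, with the lattice, Fatou, and homogeneity properties, indicators of
dilated balls having quasi-norm in `(0, ∞)`), `q ∈ [1, ∞)`, `d ∈ ℤ₊`, `s ∈ (0, ∞)`, and
`f ∈ L^q_loc`, the Campanato quasi-norm defined via finite families of dilated balls and
weights equals the analogous supremum over countable families whose weight function has
quasi-norm in `(0, ∞)`. -/
theorem stmt_11 (n d : ℕ) (q s : ℝ) (hq : 1 ≤ q) (hs : 0 < s)
    (N : ((Fin n → ℝ) → ENNReal) → ENNReal)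
    (Balls : Set (Set (Fin n → ℝ)))
    (hBmeas : ∀ B ∈ Balls, MeasurableSet B ∧ 0 < volume B ∧ volume B < ⊤)
    (hBpos : ∀ B ∈ Balls, 0 < N (Set.indicator B fun _ => 1))
    (hBfin : ∀ B ∈ Balls, N (Set.indicator B fun _ => 1) < ⊤)
    (hmono : ∀ F G : (Fin n → ℝ) → ENNReal,
      (∀ᵐ x ∂(volume : Measure (Fin n → ℝ)), F x ≤ G x) → N F ≤ N G)
    (hhom : ∀ (c : ENNReal) (F : (Fin n → ℝ) → ENNReal), c ≠ ⊤ →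
      N (fun x => c * F x) = c * N F)
    (hfatou : ∀ (F : ℕ → (Fin n → ℝ) → ENNReal) (G : (Fin n → ℝ) → ENNReal),
      (∀ x, Monotone fun m => F m x) → (∀ x, (⨆ m, F m x) = G x) →
      (⨆ m, N (F m)) = N G)
    (f : (Fin n → ℝ) → ℝ)
    (hf : ∀ B ∈ Balls, Integrable (fun x => |f x| ^ q) (volume.restrict B))
    (P : Set (Fin n → ℝ) → (Fin n → ℝ) → ℝ)
    (hP : ∀ B ∈ Balls, ∃ Q : MvPolynomial (Fin n) ℝ, Q.totalDegree ≤ d ∧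
      (∀ x, P B x = MvPolynomial.eval x Q) ∧
      ∀ R : MvPolynomial (Fin n) ℝ, R.totalDegree ≤ d →
        ∫ x in B, (f x - P B x) * MvPolynomial.eval x R ∂volume = 0) :
    sSup {c : ENNReal | ∃ (m : ℕ) (Bf : ℕ → Set (Fin n → ℝ)) (lam : ℕ → NNReal),
        (∀ i, Bf i ∈ Balls) ∧ (∑ j ∈ Finset.range m, lam j) ≠ 0 ∧
        c = (N (fun x => (∑ i ∈ Finset.range m, camWeight s N (Bf i) (lam i) x) ^ (1 / s)))⁻¹ *
              ∑ j ∈ Finset.range m, camTerm q N f P (Bf j) (lam j)} =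
    sSup {c : ENNReal | ∃ (Bf : ℕ → Set (Fin n → ℝ)) (lam : ℕ → NNReal),
        (∀ i, Bf i ∈ Balls) ∧
        0 < N (fun x => (∑' i, camWeight s N (Bf i) (lam i) x) ^ (1 / s)) ∧
        N (fun x => (∑' i, camWeight s N (Bf i) (lam i) x) ^ (1 / s)) < ⊤ ∧
        c = (N (fun x => (∑' i, camWeight s N (Bf i) (lam i) x) ^ (1 / s)))⁻¹ *
              ∑' j, camTerm q N f P (Bf j) (lam j)} :=
  stmt_11_general n q s hs N Balls hBpos hBfin hmono hhom f P
end

section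
/- Let $X$ be a concave ball quasi-Banach function space, $q \in [1,\infty)$, $d \in \mathbb{Z}_+$, and $s \in (0,1]$. Then the anisotropic ball Campanato-type space $\mathcal{L}^A_{X,q,d,s}(\mathbb{R}^n)$ coincides with the Campanato space $\mathcal{L}^A_{X,q,d}(\mathbb{R}^n)$, with equivalent quasi-norms: there is $C \ge 1$ with $C^{-1}\|f\|_{\mathcal{L}^A_{X,q,d}} \le \|f\|_{\mathcal{L}^A_{X,q,d,s}} \le C\|f\|_{\mathcal{L}^A_{X,q,d}}$ for all $f \in L^q_{loc}$. -/
open MeasureTheory ENNReal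

/-- The ball Campanato quasi-norm `‖f‖_{𝓛^A_{X,q,d,s}}`, a supremum over finite families
of dilated balls and nonnegative weights with `∑ λ_j ≠ 0`. -/
noncomputable def camNormWeighted {n : ℕ} (q s : ℝ)
    (N : ((Fin n → ℝ) → ENNReal) → ENNReal) (Balls : Set (Set (Fin n → ℝ)))
    (f : (Fin n → ℝ) → ℝ) (P : Set (Fin n → ℝ) → (Fin n → ℝ) → ℝ) : ENNReal :=
  sSup {c : ENNReal | ∃ (m : ℕ) (Bf : ℕ → Set (Fin n → ℝ)) (lam : ℕ → NNReal),
    (∀ i, Bf i ∈ Balls) ∧ (∑ j ∈ Finset.range m, lam j) ≠ 0 ∧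
    c = (N (fun x => (∑ i ∈ Finset.range m, camWeight s N (Bf i) (lam i) x) ^ (1 / s)))⁻¹ *
          ∑ j ∈ Finset.range m, camTerm q N f P (Bf j) (lam j)}

/-- The plain Campanato quasi-norm
`‖f‖_{𝓛^A_{X,q,d}} = sup_B |B|/‖1_B‖_X (⨍_B |f - P_B^d f|^q)^{1/q}`. -/
noncomputable def camNormPlain {n : ℕ} (q : ℝ)
    (N : ((Fin n → ℝ) → ENNReal) → ENNReal) (Balls : Set (Set (Fin n → ℝ)))
    (f : (Fin n → ℝ) → ℝ) (P : Set (Fin n → ℝ) → (Fin n → ℝ) → ℝ) : ENNReal :=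
  ⨆ B ∈ Balls, volume B / N (Set.indicator B fun _ => 1) *
    ENNReal.ofReal ((⨍ x in B, |f x - P B x| ^ q ∂volume) ^ (1 / q))

/-! The weighted norm dominates the plain one by testing it on a single ball with weight `1`.
Conversely, if `F_j = λ_j / ‖1_{B_j}‖_X · 1_{B_j}`, then `‖F_j‖_X = λ_j`, and since `s ≤ 1`
the `ℓ^s`-sum `(∑ F_j^s)^{1/s}` dominates `∑ F_j` pointwise; concavity of `X` then gives
`∑ λ_j ≤ C ‖(∑ F_j^s)^{1/s}‖_X`, while each summand of the weighted norm is at most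
`λ_j ‖f‖_{𝓛^A_{X,q,d}}`. -/

namespace ENNReal

theorem sum_le_rpow_sum_rpow {ι : Type*} {s : ℝ} (hs : 0 < s) (hs1 : s ≤ 1)
    (t : Finset ι) (b : ι → ℝ≥0∞) : ∑ i ∈ t, b i ≤ (∑ i ∈ t, b i ^ s) ^ (1 / s) := by
  have hsub : (∑ i ∈ t, b i) ^ s ≤ ∑ i ∈ t, b i ^ s :=
    Finset.le_sum_of_subadditive (· ^ s) (by simp [hs])
      (fun x y => rpow_add_le_add_rpow x y hs.le hs1) t b
  calc ∑ i ∈ t, b i = ((∑ i ∈ t, b i) ^ s) ^ (1 / s) := by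
        rw [← rpow_mul, mul_one_div_cancel hs.ne', rpow_one]
    _ ≤ _ := rpow_le_rpow hsub (by positivity)

theorem mul_indicator_one_rpow {α : Type*} (B : Set α) (c : ℝ≥0∞) {s : ℝ} (hs : 0 < s)
    (x : α) : (c * B.indicator (fun _ => 1) x) ^ s = c ^ s * B.indicator (fun _ => 1) x := by
  by_cases hx : x ∈ B <;> simp [hx, hs]

end ENNReal

theorem sum_le_mul_of_concave {α : Type*} {N : (α → ℝ≥0∞) → ℝ≥0∞} {C : ℝ≥0∞}
    (hconc : ∀ F : ℕ → α → ℝ≥0∞, ∑' k, N (F k) ≤ C * N (fun x => ∑' k, F k x))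
    (t : Finset ℕ) (G : ℕ → α → ℝ≥0∞) :
    ∑ k ∈ t, N (G k) ≤ C * N (fun x => ∑ k ∈ t, G k x) := by
  classical
  set F : ℕ → α → ℝ≥0∞ := fun k => if k ∈ t then G k else 0
  have hF : (fun x => ∑' k, F k x) = fun x => ∑ k ∈ t, G k x := by
    funext x
    rw [tsum_eq_sum (s := t) fun k hk => by simp [F, hk]]
    exact Finset.sum_congr rfl fun k hk => by simp [F, hk]
  calc ∑ k ∈ t, N (G k) = ∑ k ∈ t, N (F k) := Finset.sum_congr rfl fun k hk => by simp [F, hk]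
    _ ≤ ∑' k, N (F k) := ENNReal.sum_le_tsum t
    _ ≤ C * N (fun x => ∑' k, F k x) := hconc F
    _ = C * N (fun x => ∑ k ∈ t, G k x) := by rw [hF]

section Campanato

variable {n : ℕ} {q s : ℝ} {N : ((Fin n → ℝ) → ℝ≥0∞) → ℝ≥0∞} {Balls : Set (Set (Fin n → ℝ))}
  {f : (Fin n → ℝ) → ℝ} {P : Set (Fin n → ℝ) → (Fin n → ℝ) → ℝ}

theorem norm_div_mul_indicator
    (hhom : ∀ (c : ℝ≥0∞) (F : (Fin n → ℝ) → ℝ≥0∞), c ≠ ⊤ → N (fun x => c * F x) = c * N F)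
    {B : Set (Fin n → ℝ)} (h0 : N (B.indicator fun _ => 1) ≠ 0)
    (htop : N (B.indicator fun _ => 1) ≠ ⊤) (l : ℝ≥0∞) (hl : l ≠ ⊤) :
    N (fun x => l / N (B.indicator fun _ => 1) * B.indicator (fun _ => 1) x) = l := by
  rw [hhom _ _ (ENNReal.div_lt_top hl h0).ne, ENNReal.div_mul_cancel h0 htop]

theorem camWeight_eq_rpow (hs : 0 < s) (B : Set (Fin n → ℝ)) (l : NNReal) (x : Fin n → ℝ) :
    camWeight s N B l x =
      ((l : ℝ≥0∞) / N (B.indicator fun _ => 1) * B.indicator (fun _ => 1) x) ^ s :=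
  (ENNReal.mul_indicator_one_rpow B _ hs x).symm

theorem camTerm_le_mul_camNormPlain {B : Set (Fin n → ℝ)} (hB : B ∈ Balls) (l : NNReal) :
    camTerm q N f P B l ≤ l * camNormPlain q N Balls f P := by
  rw [camTerm, camNormPlain, mul_div_assoc, mul_assoc]
  gcongr
  exact le_iSup₂_of_le B hB le_rfl

theorem camNormPlain_le_camNormWeighted (hs : 0 < s)
    (hBpos : ∀ B ∈ Balls, 0 < N (Set.indicator B fun _ => 1))
    (hBfin : ∀ B ∈ Balls, N (Set.indicator B fun _ => 1) < ⊤)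
    (hhom : ∀ (c : ℝ≥0∞) (F : (Fin n → ℝ) → ℝ≥0∞), c ≠ ⊤ → N (fun x => c * F x) = c * N F) :
    camNormPlain q N Balls f P ≤ camNormWeighted q s N Balls f P := by
  refine iSup₂_le fun B hB => le_sSup ⟨1, fun _ => B, fun _ => 1, fun _ => hB, by simp, ?_⟩
  have hweight : (fun x => (∑ i ∈ Finset.range 1, camWeight s N B 1 x) ^ (1 / s)) =
      fun x => 1 / N (B.indicator fun _ => 1) * B.indicator (fun _ => 1) x := by
    funext x
    rw [Finset.sum_range_one, camWeight_eq_rpow hs, ← ENNReal.rpow_mul,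
      mul_one_div_cancel hs.ne', ENNReal.rpow_one, ENNReal.coe_one]
  beta_reduce
  rw [hweight, norm_div_mul_indicator hhom (hBpos B hB).ne' (hBfin B hB).ne 1 ENNReal.one_ne_top]
  simp [camTerm]

theorem sum_le_mul_norm_camWeight (hs : 0 < s) (hs1 : s ≤ 1)
    (hBpos : ∀ B ∈ Balls, 0 < N (Set.indicator B fun _ => 1))
    (hBfin : ∀ B ∈ Balls, N (Set.indicator B fun _ => 1) < ⊤)
    (hmono : ∀ F G : (Fin n → ℝ) → ℝ≥0∞,
      (∀ᵐ x ∂(volume : Measure (Fin n → ℝ)), F x ≤ G x) → N F ≤ N G)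
    (hhom : ∀ (c : ℝ≥0∞) (F : (Fin n → ℝ) → ℝ≥0∞), c ≠ ⊤ → N (fun x => c * F x) = c * N F)
    {Cc : ℝ≥0∞}
    (hconc : ∀ F : ℕ → (Fin n → ℝ) → ℝ≥0∞, ∑' k, N (F k) ≤ Cc * N (fun x => ∑' k, F k x))
    (m : ℕ) {Bf : ℕ → Set (Fin n → ℝ)} (hBf : ∀ i, Bf i ∈ Balls) (lam : ℕ → NNReal) :
    ∑ j ∈ Finset.range m, (lam j : ℝ≥0∞) ≤
      Cc * N (fun x => (∑ i ∈ Finset.range m, camWeight s N (Bf i) (lam i) x) ^ (1 / s)) := by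
  set F : ℕ → (Fin n → ℝ) → ℝ≥0∞ := fun k x =>
    (lam k : ℝ≥0∞) / N ((Bf k).indicator fun _ => 1) * (Bf k).indicator (fun _ => 1) x
  have hnormF : ∀ k, N (F k) = lam k := fun k =>
    norm_div_mul_indicator hhom (hBpos _ (hBf k)).ne' (hBfin _ (hBf k)).ne _ ENNReal.coe_ne_top
  have hFle : ∀ x, ∑ k ∈ Finset.range m, F k x ≤
      (∑ i ∈ Finset.range m, camWeight s N (Bf i) (lam i) x) ^ (1 / s) := fun x => by
    simp_rw [camWeight_eq_rpow hs]
    exact ENNReal.sum_le_rpow_sum_rpow hs hs1 _ _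
  calc ∑ j ∈ Finset.range m, (lam j : ℝ≥0∞) = ∑ j ∈ Finset.range m, N (F j) := by
        simp_rw [hnormF]
    _ ≤ Cc * N (fun x => ∑ k ∈ Finset.range m, F k x) := sum_le_mul_of_concave hconc _ F
    _ ≤ _ := mul_le_mul_right (hmono _ _ (Filter.Eventually.of_forall hFle)) _

theorem camNormWeighted_le_mul_camNormPlain (hs : 0 < s) (hs1 : s ≤ 1)
    (hBpos : ∀ B ∈ Balls, 0 < N (Set.indicator B fun _ => 1))
    (hBfin : ∀ B ∈ Balls, N (Set.indicator B fun _ => 1) < ⊤)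
    (hmono : ∀ F G : (Fin n → ℝ) → ℝ≥0∞,
      (∀ᵐ x ∂(volume : Measure (Fin n → ℝ)), F x ≤ G x) → N F ≤ N G)
    (hhom : ∀ (c : ℝ≥0∞) (F : (Fin n → ℝ) → ℝ≥0∞), c ≠ ⊤ → N (fun x => c * F x) = c * N F)
    {Cc : ℝ≥0∞}
    (hconc : ∀ F : ℕ → (Fin n → ℝ) → ℝ≥0∞, ∑' k, N (F k) ≤ Cc * N (fun x => ∑' k, F k x)) :
    camNormWeighted q s N Balls f P ≤ Cc * camNormPlain q N Balls f P := by
  refine sSup_le ?_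
  rintro _ ⟨m, Bf, lam, hBf, -, rfl⟩
  set W := N (fun x => (∑ i ∈ Finset.range m, camWeight s N (Bf i) (lam i) x) ^ (1 / s))
  set NP := camNormPlain q N Balls f P
  have hterms : ∑ j ∈ Finset.range m, camTerm q N f P (Bf j) (lam j) ≤
      (∑ j ∈ Finset.range m, (lam j : ℝ≥0∞)) * NP := by
    rw [Finset.sum_mul]
    exact Finset.sum_le_sum fun j _ => camTerm_le_mul_camNormPlain (hBf j) (lam j)
  calc W⁻¹ * ∑ j ∈ Finset.range m, camTerm q N f P (Bf j) (lam j)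
      ≤ W⁻¹ * (Cc * W * NP) := by
        gcongr
        exact hterms.trans (mul_le_mul_left
          (sum_le_mul_norm_camWeight hs hs1 hBpos hBfin hmono hhom hconc m hBf lam) _)
    _ = W⁻¹ * W * (Cc * NP) := by ring
    _ ≤ Cc * NP := mul_le_of_le_one_left zero_le (ENNReal.inv_mul_le_one W)

end Campanato

theorem stmt_12_general (n d : ℕ) (q s : ℝ) (hs : 0 < s) (hs1 : s ≤ 1)
    (N : ((Fin n → ℝ) → ENNReal) → ENNReal)
    (Balls : Set (Set (Fin n → ℝ)))
    (hBpos : ∀ B ∈ Balls, 0 < N (Set.indicator B fun _ => 1))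
    (hBfin : ∀ B ∈ Balls, N (Set.indicator B fun _ => 1) < ⊤)
    (hmono : ∀ F G : (Fin n → ℝ) → ENNReal,
      (∀ᵐ x ∂(volume : Measure (Fin n → ℝ)), F x ≤ G x) → N F ≤ N G)
    (hhom : ∀ (c : ENNReal) (F : (Fin n → ℝ) → ENNReal), c ≠ ⊤ →
      N (fun x => c * F x) = c * N F)
    (hconc : ∃ Cc : ENNReal, 0 < Cc ∧ Cc < ⊤ ∧
      ∀ F : ℕ → (Fin n → ℝ) → ENNReal, ∑' k, N (F k) ≤ Cc * N (fun x => ∑' k, F k x)) :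
    ∃ C : ENNReal, 1 ≤ C ∧ C < ⊤ ∧
      ∀ (f : (Fin n → ℝ) → ℝ),
        (∀ B ∈ Balls, Integrable (fun x => |f x| ^ q) (volume.restrict B)) →
        ∀ P : Set (Fin n → ℝ) → (Fin n → ℝ) → ℝ,
        (∀ B ∈ Balls, ∃ Q : MvPolynomial (Fin n) ℝ, Q.totalDegree ≤ d ∧
          (∀ x, P B x = MvPolynomial.eval x Q) ∧
          ∀ R : MvPolynomial (Fin n) ℝ, R.totalDegree ≤ d →
            ∫ x in B, (f x - P B x) * MvPolynomial.eval x R ∂volume = 0) →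
        camNormPlain q N Balls f P ≤ C * camNormWeighted q s N Balls f P ∧
        camNormWeighted q s N Balls f P ≤ C * camNormPlain q N Balls f P := by
  obtain ⟨Cc, -, hCcT, hCc⟩ := hconc
  refine ⟨max 1 Cc, le_max_left _ _, max_lt ENNReal.one_lt_top hCcT, fun f _ P _ => ⟨?_, ?_⟩⟩
  · calc camNormPlain q N Balls f P ≤ camNormWeighted q s N Balls f P :=
          camNormPlain_le_camNormWeighted hs hBpos hBfin hhom
      _ ≤ max 1 Cc * camNormWeighted q s N Balls f P :=
          le_mul_of_one_le_left zero_le (le_max_left _ _)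
  · calc camNormWeighted q s N Balls f P ≤ Cc * camNormPlain q N Balls f P :=
          camNormWeighted_le_mul_camNormPlain hs hs1 hBpos hBfin hmono hhom hCc
      _ ≤ max 1 Cc * camNormPlain q N Balls f P := by gcongr; exact le_max_right _ _

/-- If `X` is a *concave* ball quasi-Banach function space, `q ∈ [1, ∞)`,
`d ∈ ℤ₊`, and `s ∈ (0, 1]`, then `𝓛^A_{X,q,d,s}(ℝⁿ) = 𝓛^A_{X,q,d}(ℝⁿ)` with
equivalent quasi-norms. -/
theorem stmt_12 (n d : ℕ) (q s : ℝ) (hq : 1 ≤ q) (hs : 0 < s) (hs1 : s ≤ 1)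
    (N : ((Fin n → ℝ) → ENNReal) → ENNReal)
    (Balls : Set (Set (Fin n → ℝ)))
    (hBmeas : ∀ B ∈ Balls, MeasurableSet B ∧ 0 < volume B ∧ volume B < ⊤)
    (hBpos : ∀ B ∈ Balls, 0 < N (Set.indicator B fun _ => 1))
    (hBfin : ∀ B ∈ Balls, N (Set.indicator B fun _ => 1) < ⊤)
    (hmono : ∀ F G : (Fin n → ℝ) → ENNReal,
      (∀ᵐ x ∂(volume : Measure (Fin n → ℝ)), F x ≤ G x) → N F ≤ N G)
    (hhom : ∀ (c : ENNReal) (F : (Fin n → ℝ) → ENNReal), c ≠ ⊤ →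
      N (fun x => c * F x) = c * N F)
    (hconc : ∃ Cc : ENNReal, 0 < Cc ∧ Cc < ⊤ ∧
      ∀ F : ℕ → (Fin n → ℝ) → ENNReal, ∑' k, N (F k) ≤ Cc * N (fun x => ∑' k, F k x)) :
    ∃ C : ENNReal, 1 ≤ C ∧ C < ⊤ ∧
      ∀ (f : (Fin n → ℝ) → ℝ),
        (∀ B ∈ Balls, Integrable (fun x => |f x| ^ q) (volume.restrict B)) →
        ∀ P : Set (Fin n → ℝ) → (Fin n → ℝ) → ℝ,
        (∀ B ∈ Balls, ∃ Q : MvPolynomial (Fin n) ℝ, Q.totalDegree ≤ d ∧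
          (∀ x, P B x = MvPolynomial.eval x Q) ∧
          ∀ R : MvPolynomial (Fin n) ℝ, R.totalDegree ≤ d →
            ∫ x in B, (f x - P B x) * MvPolynomial.eval x R ∂volume = 0) →
        camNormPlain q N Balls f P ≤ C * camNormWeighted q s N Balls f P ∧
        camNormWeighted q s N Balls f P ≤ C * camNormPlain q N Balls f P :=
  stmt_12_general n d q s hs hs1 N Balls hBpos hBfin hmono hhom hconc
end
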